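/- arXiv:2110.03600 — 2 statements merged into one kernel-verified Lean document; each statement's English description precedes it below -/
import Mathlib

section
/- Let k ≤ n be positive integers and X a k × n matrix with non-negative real entries such that all rows have the same sum, each column sums to at most 1, and at least k columns sum to exactly 1. If x_{j₀,i₀} > 0 for some j₀ ∈ [k] and i₀ ∈ [n], then there exists an injective function π : [k] → [n] with π(j₀) = i₀ and x_{j,π(j)} > 0 for all j ∈ [k]. -/
open Finset

/-- The standard simplex Δ^{k-1} ⊆ ℝ^k. -/
def simplex (k : ℕ) : Set (Fin k → ℝ) := stdSimplex ℝ (Fin k)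

/-- The face of Δ^{k-1} spanned by the vertices in `S`. -/
def face {k : ℕ} (S : Finset (Fin k)) : Set (Fin k → ℝ) :=
  {x | x ∈ simplex k ∧ ∀ j ∉ S, x j = 0}

/-- The facet of Δ^{k-1} opposite vertex `j`. -/
def facet {k : ℕ} (j : Fin k) : Set (Fin k → ℝ) := {x | x ∈ simplex k ∧ x j = 0}

/-- A tuple `A` is a KKM cover if every face is covered by the sets indexed by its vertices. -/
def IsKKM {k : ℕ} (A : Fin k → Set (Fin k → ℝ)) : Prop :=
  ∀ S : Finset (Fin k), S.Nonempty → face S ⊆ ⋃ j ∈ S, A j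

/-- A tuple `A` is a dual KKM cover of Δ^{k-1}. -/
def IsDualKKM {k : ℕ} (A : Fin k → Set (Fin k → ℝ)) : Prop :=
  (∀ j, IsClosed (A j) ∧ A j ⊆ simplex k) ∧ (simplex k ⊆ ⋃ j, A j) ∧
    ∀ j j', j ≠ j' → A j ∩ facet j' ⊆ facet j ∩ facet j'

open Function

/-! Assign `i₀` to `j₀` and complete the assignment by Hall's theorem on the remaining rows and
columns. A row set `S ∌ j₀` carries mass `#S * c ≥ #S`, all of it inside its positive columns
other than `i₀`, each holding at most `1`, plus column `i₀`, which holds at most `1 - X j₀ i₀ < 1`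
outside row `j₀`. Hence `S` has at least `#S` positive columns other than `i₀`. That `c ≥ 1`
follows by double counting: the total mass `k * c` is at least the mass of the `k` full columns. -/

theorem Function.Injective.exists_extend_of_notMem_range {α β : Type*} [DecidableEq α]
    {a₀ : α} {b₀ : β} {f : {a // a ≠ a₀} → β} (hf : Injective f) (hb₀ : b₀ ∉ Set.range f) :
    ∃ g : α → β, Injective g ∧ g a₀ = b₀ ∧ ∀ a (ha : a ≠ a₀), g a = f ⟨a, ha⟩ := by
  let e : Option {a // a ≠ a₀} ↪ β := Embedding.optionElim ⟨f, hf⟩ b₀ hb₀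
  refine ⟨e ∘ (Equiv.optionSubtypeNe a₀).symm, e.injective.comp (Equiv.injective _), ?_, ?_⟩
  · simp [e]
  · intro a ha
    simp [e, Equiv.optionSubtypeNe_symm_of_ne ha]

section PositiveTransversal

variable {ι κ : Type*} [Fintype ι] {X : ι → κ → ℝ} {c : ℝ}

theorem sum_le_one_sub_of_notMem (hpos : ∀ j i, 0 ≤ X j i) (hcol : ∀ i, ∑ j, X j i ≤ 1)
    {S : Finset ι} {j₀ : ι} (hS : j₀ ∉ S) (i : κ) : ∑ j ∈ S, X j i ≤ 1 - X j₀ i := by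
  classical
  have := (sum_le_univ_sum_of_nonneg (s := insert j₀ S) fun j => hpos j i).trans (hcol i)
  rw [sum_insert hS] at this
  linarith

variable [Fintype κ]

theorem one_le_of_rowSum_eq [Nonempty ι] (hpos : ∀ j i, 0 ≤ X j i) (hrow : ∀ j, ∑ i, X j i = c)
    (hones : Fintype.card ι ≤ #{i | ∑ j, X j i = 1}) : 1 ≤ c := by
  have hmass : (Fintype.card ι : ℝ) ≤ Fintype.card ι * c :=
    calc (Fintype.card ι : ℝ) ≤ #{i | ∑ j, X j i = 1} := by exact_mod_cast hones
      _ = ∑ i with ∑ j, X j i = 1, ∑ j, X j i := by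
          rw [Finset.sum_congr rfl fun i hi => (mem_filter.1 hi).2]; simp
      _ ≤ ∑ i, ∑ j, X j i :=
          sum_le_univ_sum_of_nonneg fun i => sum_nonneg fun j _ => hpos j i
      _ = Fintype.card ι * c := by rw [sum_comm]; simp [hrow]
  have hcard : (0 : ℝ) < Fintype.card ι := by exact_mod_cast Fintype.card_pos
  nlinarith

variable [DecidableEq κ]

theorem card_mul_le_card_biUnion_add (hpos : ∀ j i, 0 ≤ X j i) (hrow : ∀ j, ∑ i, X j i = c)
    (hcol : ∀ i, ∑ j, X j i ≤ 1) {S : Finset ι} {j₀ : ι} (hS : j₀ ∉ S) (i₀ : κ) :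
    #S * c ≤ #(S.biUnion fun j => {i | i ≠ i₀ ∧ 0 < X j i}) + (1 - X j₀ i₀) := by
  set N := S.biUnion fun j => {i | i ≠ i₀ ∧ 0 < X j i}
  have hi₀ : i₀ ∉ N := by simp [N]
  have hzero : ∀ i ∉ insert i₀ N, ∑ j ∈ S, X j i = 0 := by
    intro i hi
    have hne : i ≠ i₀ := by rintro rfl; exact hi (mem_insert_self _ _)
    refine sum_eq_zero fun j hj => (hpos j i).antisymm' (not_lt.1 fun hlt => hi ?_)
    exact mem_insert_of_mem (mem_biUnion.2 ⟨j, hj, by simp [hlt, hne]⟩)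
  calc #S * c = ∑ i, ∑ j ∈ S, X j i := by rw [sum_comm]; simp [hrow]
    _ = ∑ j ∈ S, X j i₀ + ∑ i ∈ N, ∑ j ∈ S, X j i := by
        rw [← sum_subset (subset_univ _) fun i _ hi => hzero i hi, sum_insert hi₀]
    _ ≤ (1 - X j₀ i₀) + ∑ _i ∈ N, (1 : ℝ) := by
        gcongr with i
        · exact sum_le_one_sub_of_notMem hpos hcol hS i₀
        · exact (sum_le_univ_sum_of_nonneg fun j => hpos j i).trans (hcol i)
    _ = #N + (1 - X j₀ i₀) := by simp [add_comm]

theorem card_le_card_biUnion_pos (hpos : ∀ j i, 0 ≤ X j i) (hrow : ∀ j, ∑ i, X j i = c)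
    (hc : 1 ≤ c) (hcol : ∀ i, ∑ j, X j i ≤ 1) {j₀ : ι} {i₀ : κ} (h₀ : 0 < X j₀ i₀)
    {S : Finset ι} (hS : j₀ ∉ S) :
    #S ≤ #(S.biUnion fun j => {i | i ≠ i₀ ∧ 0 < X j i}) := by
  have hmass := card_mul_le_card_biUnion_add hpos hrow hcol hS i₀
  have hlt : (#S : ℝ) < #(S.biUnion fun j => {i | i ≠ i₀ ∧ 0 < X j i}) + 1 := by
    nlinarith [(Nat.cast_nonneg #S : (0 : ℝ) ≤ #S)]
  exact Nat.lt_succ_iff.1 (by exact_mod_cast hlt)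

theorem exists_injective_pos_of_rowSum_eq [DecidableEq ι] (hpos : ∀ j i, 0 ≤ X j i)
    (hrow : ∀ j, ∑ i, X j i = c) (hc : 1 ≤ c) (hcol : ∀ i, ∑ j, X j i ≤ 1) {j₀ : ι} {i₀ : κ}
    (h₀ : 0 < X j₀ i₀) : ∃ π : ι → κ, Injective π ∧ π j₀ = i₀ ∧ ∀ j, 0 < X j (π j) := by
  obtain ⟨f, hf, hmem⟩ := (all_card_le_biUnion_card_iff_exists_injective
    fun j : {j // j ≠ j₀} => ({i | i ≠ i₀ ∧ 0 < X j i} : Finset κ)).1 fun s => by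
      have hS : j₀ ∉ s.image Subtype.val := by simp
      simpa [image_biUnion, card_image_of_injective _ Subtype.val_injective]
        using card_le_card_biUnion_pos hpos hrow hc hcol h₀ hS
  simp only [mem_filter, mem_univ, true_and] at hmem
  obtain ⟨π, hπ, hπj₀, hπf⟩ :=
    hf.exists_extend_of_notMem_range (b₀ := i₀) fun ⟨j, hj⟩ => (hmem j).1 hj
  refine ⟨π, hπ, hπj₀, fun j => ?_⟩
  by_cases hj : j = j₀
  · subst hj; rwa [hπj₀]
  · rw [hπf j hj]; exact (hmem ⟨j, hj⟩).2

end PositiveTransversal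

theorem stmt1_general (k n : ℕ) (X : Fin k → Fin n → ℝ)
    (hpos : ∀ j i, 0 ≤ X j i)
    (hrow : ∃ c, ∀ j, ∑ i, X j i = c)
    (hcol : ∀ i, ∑ j, X j i ≤ 1)
    (hones : k ≤ (univ.filter fun i => ∑ j, X j i = 1).card)
    (j₀ : Fin k) (i₀ : Fin n) (h₀ : 0 < X j₀ i₀) :
    ∃ π : Fin k → Fin n, Function.Injective π ∧ π j₀ = i₀ ∧ ∀ j, 0 < X j (π j) := by
  obtain ⟨c, hc⟩ := hrow
  have : Nonempty (Fin k) := ⟨j₀⟩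
  exact exists_injective_pos_of_rowSum_eq hpos hc
    (one_le_of_rowSum_eq hpos hc (by simpa using hones)) hcol h₀

theorem stmt1 (k n : ℕ) (hk : 0 < k) (hkn : k ≤ n) (X : Fin k → Fin n → ℝ)
    (hpos : ∀ j i, 0 ≤ X j i)
    (hrow : ∃ c, ∀ j, ∑ i, X j i = c)
    (hcol : ∀ i, ∑ j, X j i ≤ 1)
    (hones : k ≤ (univ.filter fun i => ∑ j, X j i = 1).card)
    (j₀ : Fin k) (i₀ : Fin n) (h₀ : 0 < X j₀ i₀) :
    ∃ π : Fin k → Fin n, Function.Injective π ∧ π j₀ = i₀ ∧ ∀ j, 0 < X j (π j) :=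
  stmt1_general k n X hpos hrow hcol hones j₀ i₀ h₀
end

section
/- Let G be a bipartite graph between a set R of size k and a set [n] of columns, where j is adjacent to i iff x_{j,i} > 0 for a k × n matrix X with non-negative entries, constant row sums, column sums at most 1, and at least r columns summing to 1 (k ≤ r ≤ n). Then for every nonempty subset S of the rows, |N(S)| ≥ |S| + ⌈(r−k)/k⌉, where N(S) is the set of columns adjacent to some row in S. -/
open Finset

/-
Let `c` be the common row sum. Summing all entries, `k * c` is at least the number `r` of
columns of sum one, so `c ≥ r / k ≥ 1`. The rows of `S` carry total mass `#S * c`, all of it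
sitting in the columns of `N(S)`, each of which holds at most one unit; hence `#S * c ≤ #N(S)`.
Therefore `#N(S) - #S ≥ #S * (c - 1) ≥ c - 1 ≥ (r - k) / k`, and the left side is an integer.
-/

theorem card_filter_eq_one_le_sum {κ : Type*} [Fintype κ] (f : κ → ℝ) (hf : ∀ i, 0 ≤ f i) :
    (#(univ.filter fun i => f i = 1) : ℝ) ≤ ∑ i, f i := by
  rw [card_filter, Nat.cast_sum]
  gcongr with i
  split_ifs with h <;> simp [h, hf i]

theorem sum_le_card_filter_exists_pos {ι κ : Type*} [Fintype ι] [Fintype κ] (X : ι → κ → ℝ)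
    (hpos : ∀ j i, 0 ≤ X j i) (hcol : ∀ i, ∑ j, X j i ≤ 1) (S : Finset ι)
    [DecidablePred fun i => ∃ j ∈ S, 0 < X j i] :
    ∑ j ∈ S, ∑ i, X j i ≤ #(univ.filter fun i => ∃ j ∈ S, 0 < X j i) := by
  rw [sum_comm, card_filter, Nat.cast_sum]
  gcongr with i
  split_ifs with h
  · exact (sum_le_sum_of_subset_of_nonneg (subset_univ S) fun j _ _ => hpos j i).trans
      (by simpa using hcol i)
  · simp only [not_exists, not_and, not_lt] at h
    simp only [Nat.cast_zero]
    exact sum_nonpos fun j hj => h j hj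

theorem stmt3_general (k r n : ℕ) (hk : 0 < k) (hkr : k ≤ r)
    (X : Fin k → Fin n → ℝ)
    (hpos : ∀ j i, 0 ≤ X j i)
    (hrow : ∃ c, ∀ j, ∑ i, X j i = c)
    (hcol : ∀ i, ∑ j, X j i ≤ 1)
    (hones : r ≤ (univ.filter fun i => ∑ j, X j i = 1).card)
    (S : Finset (Fin k)) (hS : S.Nonempty) :
    (S.card : ℤ) + ⌈((r : ℚ) - k) / k⌉ ≤
      ((univ.filter fun i : Fin n => ∃ j ∈ S, 0 < X j i).card : ℤ) := by
  obtain ⟨c, hc⟩ := hrow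
  have hSN := sum_le_card_filter_exists_pos X hpos hcol S
  simp only [hc, sum_const, nsmul_eq_mul] at hSN
  generalize (univ.filter fun i : Fin n => ∃ j ∈ S, 0 < X j i) = N at hSN ⊢
  have hr_le : (r : ℝ) ≤ k * c := calc
    (r : ℝ) ≤ #(univ.filter fun i => ∑ j, X j i = 1) := by exact_mod_cast hones
    _ ≤ ∑ i, ∑ j, X j i := card_filter_eq_one_le_sum _ fun i => sum_nonneg fun j _ => hpos j i
    _ = k * c := by rw [sum_comm]; simp [hc]
  have hc1 : 1 ≤ c := by
    have : (k : ℝ) * 1 ≤ k * c := by rw [mul_one]; exact le_trans (by exact_mod_cast hkr) hr_le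
    exact le_of_mul_le_mul_left this (by exact_mod_cast hk)
  have hS1 : (1 : ℝ) ≤ #S := by exact_mod_cast hS.card_pos
  have hgap_real : (r : ℝ) - k ≤ k * ((#N : ℝ) - #S) := calc
    (r : ℝ) - k ≤ k * (c - 1) := by linarith
    _ ≤ k * ((#N : ℝ) - #S) := by
      refine mul_le_mul_of_nonneg_left ?_ (Nat.cast_nonneg k)
      nlinarith [mul_nonneg (sub_nonneg.mpr hS1) (sub_nonneg.mpr hc1)]
  rw [← le_sub_iff_add_le', Int.ceil_le, div_le_iff₀ (by exact_mod_cast hk)]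
  have hgap : (r : ℤ) - k ≤ (#N - #S : ℤ) * k := by
    rw [mul_comm]; exact_mod_cast hgap_real
  exact_mod_cast hgap

theorem stmt3 (k r n : ℕ) (hk : 0 < k) (hkr : k ≤ r) (hrn : r ≤ n)
    (X : Fin k → Fin n → ℝ)
    (hpos : ∀ j i, 0 ≤ X j i)
    (hrow : ∃ c, ∀ j, ∑ i, X j i = c)
    (hcol : ∀ i, ∑ j, X j i ≤ 1)
    (hones : r ≤ (univ.filter fun i => ∑ j, X j i = 1).card)
    (S : Finset (Fin k)) (hS : S.Nonempty) :
    (S.card : ℤ) + ⌈((r : ℚ) - k) / k⌉ ≤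
      ((univ.filter fun i : Fin n => ∃ j ∈ S, 0 < X j i).card : ℤ) :=
  stmt3_general k r n hk hkr X hpos hrow hcol hones S hS
end
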